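/- Let p be a prime and A an abelian group such that A[p] is finite and multiplication by n is surjective on A for every integer n ≥ 1 coprime to p. Let D = ⋂_{n≥1} pⁿA. Then the torsion subgroup of the quotient A/D is finite. (Abstract form of Lemma 3.21, part (ii).) -/

import Mathlib

/-- The subgroup `p^∞A = ⋂_{n≥1} pⁿA` of an abelian group `A`. -/
def pinfSubgroup (p : ℕ) (A : Type*) [AddCommGroup A] : AddSubgroup A where
  carrier := {a | ∀ n : ℕ, 1 ≤ n → ∃ x : A, p ^ n • x = a}
  zero_mem' := fun _ _ => ⟨0, smul_zero _⟩
  add_mem' := by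
    intro a b ha hb n hn
    obtain ⟨x, hx⟩ := ha n hn
    obtain ⟨y, hy⟩ := hb n hn
    exact ⟨x + y, by rw [smul_add, hx, hy]⟩
  neg_mem' := by
    intro a ha n hn
    obtain ⟨x, hx⟩ := ha n hn
    exact ⟨-x, by rw [smul_neg, hx]⟩

/-!
Put `B = A ⧸ p^∞A`. Then `p^∞B = 0`, and `B[p]` is finite: by pigeonhole over the finite set
`A[p]`, every element of `B[p]` lifts to `A[p]`. Bézout shows that `B` has no torsion prime to
`p`. As `B[p]` is finite and `⋂ pⁿB = 0`, some `p^N B` meets `B[p]` trivially, and then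
`p^k y = 0` forces `p^N y = 0`: for `k > N`, `p^(k-1) y` lies in `B[p] ∩ p^N B`. Hence the
torsion of `B` is `B[p^N]`, which is finite since all `B[p^k]` are.
-/

open Filter

theorem Set.Finite.nonempty_inter_iInter_of_antitone {α : Type*} {S : Set α} (hS : S.Finite)
    {P : ℕ → Set α} (hP : Antitone P) (h : ∀ n, (S ∩ P n).Nonempty) :
    (S ∩ ⋂ n, P n).Nonempty := by
  have hfreq : ∃ᶠ n in atTop, ∃ t ∈ S, t ∈ P n := .of_forall h
  obtain ⟨t, htS, ht⟩ := hS.frequently_exists.mp hfreq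
  refine ⟨t, htS, Set.mem_iInter.2 fun m => ?_⟩
  obtain ⟨n, hmn, htn⟩ := frequently_atTop.mp ht m
  exact hP hmn htn

theorem AddMonoidHom.finite_preimage_singleton {G H : Type*} [AddGroup G] [AddGroup H]
    (f : G →+ H) (hf : (f ⁻¹' {0}).Finite) (y : H) : (f ⁻¹' {y}).Finite := by
  rcases (f ⁻¹' {y}).eq_empty_or_nonempty with h | ⟨x₀, hx₀⟩
  · simp [h]
  refine (hf.image (x₀ + ·)).subset fun x hx => ⟨-x₀ + x, ?_, by simp⟩
  simp_all

section

variable {A : Type*} [AddCommGroup A] {p : ℕ}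

theorem antitone_range_pow_nsmul : Antitone fun n => Set.range fun x : A => p ^ n • x := by
  rintro m n hmn _ ⟨x, rfl⟩
  exact ⟨p ^ (n - m) • x, by beta_reduce; rw [smul_smul, ← pow_add, Nat.add_sub_cancel' hmn]⟩

theorem coe_pinfSubgroup :
    (pinfSubgroup p A : Set A) = ⋂ n, Set.range fun x : A => p ^ n • x := by
  ext a
  simp only [Set.mem_iInter, Set.mem_range]
  refine ⟨fun h n => ?_, fun h n _ => h n⟩
  rcases n with _ | n
  · exact ⟨a, one_smul ℕ a⟩
  · exact h (n + 1) n.succ_pos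

theorem mem_pinfSubgroup_iff {a : A} : a ∈ pinfSubgroup p A ↔ ∀ n, ∃ x, p ^ n • x = a := by
  rw [← SetLike.mem_coe, coe_pinfSubgroup]
  simp

theorem coe_pinfSubgroup_subset_range_pow_nsmul (n : ℕ) :
    (pinfSubgroup p A : Set A) ⊆ Set.range fun x : A => p ^ n • x := by
  rw [coe_pinfSubgroup]
  exact Set.iInter_subset _ n

theorem finite_setOf_pow_nsmul_eq_zero (hfin : {x : A | p • x = 0}.Finite) (k : ℕ) :
    {x : A | p ^ k • x = 0}.Finite := by
  induction k with
  | zero => simp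
  | succ k ih =>
    have hfiber := (DistribSMul.toAddMonoidHom A p).finite_preimage_singleton hfin
    refine (ih.preimage' fun b _ => hfiber b).subset fun x hx => ?_
    simpa [pow_succ, mul_smul] using hx

theorem mem_pinfSubgroup_of_coprime_nsmul_mem {m : ℕ} (hm : m.Coprime p) {a : A}
    (h : m • a ∈ pinfSubgroup p A) : a ∈ pinfSubgroup p A := by
  rw [mem_pinfSubgroup_iff] at h ⊢
  intro j
  obtain ⟨x, hx⟩ := h j
  obtain ⟨u, v, huv⟩ : IsCoprime (m : ℤ) ((p : ℤ) ^ j) := by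
    exact_mod_cast Nat.isCoprime_iff_coprime.mpr (hm.pow_right j)
  refine ⟨u • x + v • a, ?_⟩
  calc p ^ j • (u • x + v • a) = u • (m • a) + v • (p ^ j • a) := by
        rw [smul_add, smul_comm (p ^ j) u, smul_comm (p ^ j) v, hx]
    _ = (u * m + v * p ^ j : ℤ) • a := by
        rw [add_smul, mul_smul, mul_smul, natCast_zsmul, ← Nat.cast_pow, natCast_zsmul]
    _ = a := by rw [huv, one_smul]

theorem pinfSubgroup_quotient_pinfSubgroup :
    pinfSubgroup p (A ⧸ pinfSubgroup p A) = ⊥ := by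
  refine (AddSubgroup.eq_bot_iff_forall _).2 fun y hy => ?_
  obtain ⟨a, rfl⟩ := QuotientAddGroup.mk_surjective y
  refine (QuotientAddGroup.eq_zero_iff a).2 (mem_pinfSubgroup_iff.2 fun n => ?_)
  obtain ⟨y', hy'⟩ := mem_pinfSubgroup_iff.1 hy n
  obtain ⟨b, rfl⟩ := QuotientAddGroup.mk_surjective y'
  have hd : -(p ^ n • b) + a ∈ pinfSubgroup p A := by
    rw [← QuotientAddGroup.eq, QuotientAddGroup.mk_nsmul, hy']
  obtain ⟨c, hc⟩ := coe_pinfSubgroup_subset_range_pow_nsmul n hd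
  exact ⟨b + c, by beta_reduce at hc; rw [smul_add, hc, add_neg_cancel_left]⟩

theorem exists_nsmul_eq_zero_sub_mem_pinfSubgroup (hfin : {x : A | p • x = 0}.Finite) {a : A}
    (ha : p • a ∈ pinfSubgroup p A) : ∃ t, p • t = 0 ∧ a - t ∈ pinfSubgroup p A := by
  let P n := (a - ·) ⁻¹' Set.range fun x : A => p ^ n • x
  have hP : Antitone P := fun m n hmn => Set.preimage_mono (antitone_range_pow_nsmul hmn)
  obtain ⟨t, ht, htP⟩ := hfin.nonempty_inter_iInter_of_antitone hP fun n => by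
    obtain ⟨b, hb⟩ := mem_pinfSubgroup_iff.1 ha (n + 1)
    refine ⟨a - p ^ n • b, ?_, b, by simp⟩
    simp only [Set.mem_ofPred_eq, smul_sub, smul_smul, ← pow_succ', hb, sub_self]
  refine ⟨t, ht, ?_⟩
  rw [← SetLike.mem_coe, coe_pinfSubgroup]
  simpa [P] using htP

theorem finite_setOf_nsmul_eq_zero_quotient_pinfSubgroup (hfin : {x : A | p • x = 0}.Finite) :
    {y : A ⧸ pinfSubgroup p A | p • y = 0}.Finite := by
  refine (hfin.image QuotientAddGroup.mk).subset fun y hy => ?_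
  obtain ⟨a, rfl⟩ := QuotientAddGroup.mk_surjective y
  have ha : p • a ∈ pinfSubgroup p A := by
    rw [← QuotientAddGroup.eq_zero_iff, QuotientAddGroup.mk_nsmul]; exact hy
  obtain ⟨t, ht, hat⟩ := exists_nsmul_eq_zero_sub_mem_pinfSubgroup hfin ha
  exact ⟨t, ht, (QuotientAddGroup.eq_iff_sub_mem.2 hat).symm⟩

theorem exists_inter_range_pow_nsmul_subset_zero (hfin : {x : A | p • x = 0}.Finite)
    (hD : pinfSubgroup p A = ⊥) :
    ∃ N, {x : A | p • x = 0} ∩ Set.range (fun y : A => p ^ N • y) ⊆ {0} := by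
  by_contra! h
  obtain ⟨x, ⟨-, hx0⟩, hx⟩ := (hfin.sdiff (t := {0})).nonempty_inter_iInter_of_antitone
    (antitone_range_pow_nsmul) fun N => by
      obtain ⟨x, ⟨hpx, hxN⟩, hx0⟩ := Set.not_subset.1 (h N)
      exact ⟨x, ⟨hpx, hx0⟩, hxN⟩
  rw [← coe_pinfSubgroup, hD] at hx
  exact hx0 hx

theorem pow_nsmul_eq_zero_of_pow_nsmul_eq_zero {N : ℕ}
    (hN : {x : A | p • x = 0} ∩ Set.range (fun y : A => p ^ N • y) ⊆ {0}) {y : A} (k : ℕ)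
    (hy : p ^ k • y = 0) : p ^ N • y = 0 := by
  induction k with
  | zero => rw [pow_zero, one_smul] at hy; rw [hy, smul_zero]
  | succ k ih =>
    rcases lt_or_ge k N with hkN | hNk
    · rw [← Nat.sub_add_cancel hkN, pow_add, mul_smul, hy, smul_zero]
    · refine ih (hN ⟨?_, p ^ (k - N) • y, ?_⟩)
      · rw [Set.mem_ofPred_eq, smul_smul, ← pow_succ', hy]
      · beta_reduce; rw [smul_smul, ← pow_add, Nat.add_sub_cancel' hNk]

theorem finite_torsion_of_pinfSubgroup_eq_bot (hp : p.Prime) (hfin : {x : A | p • x = 0}.Finite)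
    (hD : pinfSubgroup p A = ⊥) : {y : A | ∃ n, 1 ≤ n ∧ n • y = 0}.Finite := by
  obtain ⟨N, hN⟩ := exists_inter_range_pow_nsmul_subset_zero hfin hD
  refine (finite_setOf_pow_nsmul_eq_zero hfin N).subset ?_
  rintro y ⟨n, hn, hny⟩
  have hn0 : n ≠ 0 := Nat.one_le_iff_ne_zero.mp hn
  have hcop : (n / p ^ n.factorization p).Coprime p := (Nat.coprime_ordCompl hp hn0).symm
  have hpy : p ^ n.factorization p • y ∈ pinfSubgroup p A := by
    refine mem_pinfSubgroup_of_coprime_nsmul_mem hcop ?_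
    rw [smul_smul, mul_comm, Nat.ordProj_mul_ordCompl_eq_self, hny]
    exact zero_mem _
  rw [hD, AddSubgroup.mem_bot] at hpy
  exact pow_nsmul_eq_zero_of_pow_nsmul_eq_zero hN _ hpy

end

theorem stmt_12_general {A : Type*} [AddCommGroup A] (p : ℕ) (hp : p.Prime)
    (hfin : {x : A | p • x = 0}.Finite) :
    {y : A ⧸ pinfSubgroup p A | ∃ n : ℕ, 1 ≤ n ∧ n • y = 0}.Finite :=
  finite_torsion_of_pinfSubgroup_eq_bot hp (finite_setOf_nsmul_eq_zero_quotient_pinfSubgroup hfin)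
    pinfSubgroup_quotient_pinfSubgroup

/-- Let `p` be a prime and `A` an abelian group with `A[p]` finite, on which multiplication
by every `n ≥ 1` coprime to `p` is surjective. Then the torsion subgroup of the quotient
`A / p^∞A` is finite. -/
theorem stmt_12 {A : Type*} [AddCommGroup A] (p : ℕ) (hp : p.Prime)
    (hfin : {x : A | p • x = 0}.Finite)
    (hdiv : ∀ n : ℕ, 1 ≤ n → Nat.Coprime n p → Function.Surjective (fun x : A => n • x)) :
    {y : A ⧸ pinfSubgroup p A | ∃ n : ℕ, 1 ≤ n ∧ n • y = 0}.Finite :=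
  stmt_12_general p hp hfin
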